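/- Let a ∈ F and let n ∈ ℤ. For j ∈ ℕ ∪ {∞}, write a_j ∈ F_j for the image of a under the natural map F → F_j. If a_∞ ∈ π_∞^n O_∞ \ π_∞^{n+1} O_∞, then there exists an integer B ≥ 1 such that the image of a in F_{≥B} lies in π^n O_{≥B}, and for every i ≥ B one has a_i ∈ π_i^n O_i \ π_i^{n+1} O_i. -/

import Mathlib

open PowerSeries

set_option maxHeartbeats 1000000
set_option synthInstance.maxHeartbeats 400000

noncomputable section

variable (k : Type) [Field k]
variable (O : ℕ → Type) [∀ i, CommRing (O i)]
variable (π : ∀ i, O i) (e : ℕ → ℕ)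
variable (ψ : ∀ i, ((PowerSeries k) ⧸ (Ideal.span {(X : PowerSeries k) ^ e i})) ≃+*
    ((O i) ⧸ (Ideal.span {π i ^ e i})))
variable (hψ : ∀ i, ψ i (Ideal.Quotient.mk _ (X : PowerSeries k)) = Ideal.Quotient.mk _ (π i))

/-- The product ring `∏_{i ∈ ℕ} O_i × O_∞`, where `O_∞ = k[[π_∞]]`. -/
abbrev ProdRing : Type := ((i : ℕ) → O i) × PowerSeries k

/-- The defining condition for membership in the subring `O`:
for every `n ≥ 1` there is `B ≥ n` such that for all `i ≥ B` the `i`-th coordinate is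
congruent to (a lift of) `ψ_i` of the `∞`-coordinate modulo `π_i^n`. -/
def closeMem (x : ProdRing k O) : Prop :=
  ∀ n : ℕ, 1 ≤ n → ∃ B, n ≤ B ∧ ∀ i, B ≤ i → ∃ y : O i,
    Ideal.Quotient.mk (Ideal.span {π i ^ e i}) y
      = ψ i (Ideal.Quotient.mk (Ideal.span {(X : PowerSeries k) ^ e i}) x.2)
    ∧ x.1 i - y ∈ Ideal.span {π i ^ n}

/-- The ring `O` of a family of close fields, as a subring of `∏_{i ∈ ℕ} O_i × O_∞`. -/
def closeSubring : Subring (ProdRing k O) where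
  carrier := {x | closeMem k O π e ψ x}
  zero_mem' := by
    intro n hn
    refine ⟨n, le_rfl, fun i hi => ⟨0, by simp, by simp⟩⟩
  one_mem' := by
    intro n hn
    refine ⟨n, le_rfl, fun i hi => ⟨1, by simp, by simp⟩⟩
  add_mem' := by
    intro a b ha hb n hn
    obtain ⟨B1, hB1, h1⟩ := ha n hn
    obtain ⟨B2, hB2, h2⟩ := hb n hn
    refine ⟨max B1 B2, hB1.trans (le_max_left _ _), fun i hi => ?_⟩
    obtain ⟨y1, hy1, hy1'⟩ := h1 i ((le_max_left _ _).trans hi)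
    obtain ⟨y2, hy2, hy2'⟩ := h2 i ((le_max_right _ _).trans hi)
    refine ⟨y1 + y2, ?_, ?_⟩
    · have : (a + b).2 = a.2 + b.2 := rfl
      rw [this, map_add, map_add, map_add, hy1, hy2]
    · have : (a + b).1 i - (y1 + y2) = (a.1 i - y1) + (b.1 i - y2) := by
        show a.1 i + b.1 i - (y1 + y2) = _
        ring
      rw [this]
      exact Ideal.add_mem _ hy1' hy2'
  neg_mem' := by
    intro a ha n hn
    obtain ⟨B, hB, h⟩ := ha n hn
    refine ⟨B, hB, fun i hi => ?_⟩
    obtain ⟨y, hy, hy'⟩ := h i hi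
    refine ⟨-y, ?_, ?_⟩
    · have : (-a).2 = -a.2 := rfl
      rw [this, map_neg, map_neg, map_neg, hy]
    · have : (-a).1 i - (-y) = -(a.1 i - y) := by
        show -a.1 i - (-y) = _
        ring
      rw [this]
      exact neg_mem hy'
  mul_mem' := by
    intro a b ha hb n hn
    obtain ⟨B1, hB1, h1⟩ := ha n hn
    obtain ⟨B2, hB2, h2⟩ := hb n hn
    refine ⟨max B1 B2, hB1.trans (le_max_left _ _), fun i hi => ?_⟩
    obtain ⟨y1, hy1, hy1'⟩ := h1 i ((le_max_left _ _).trans hi)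
    obtain ⟨y2, hy2, hy2'⟩ := h2 i ((le_max_right _ _).trans hi)
    refine ⟨y1 * y2, ?_, ?_⟩
    · have : (a * b).2 = a.2 * b.2 := rfl
      rw [this, map_mul, map_mul, map_mul, hy1, hy2]
    · have : (a * b).1 i - (y1 * y2) = (a.1 i - y1) * b.1 i + y1 * (b.1 i - y2) := by
        show a.1 i * b.1 i - (y1 * y2) = _
        ring
      rw [this]
      exact Ideal.add_mem _ (Ideal.mul_mem_right _ _ hy1') (Ideal.mul_mem_left _ _ hy2')

/-- The element `π = (π_1, π_2, …, π_∞)` of `O`. -/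
def piO : closeSubring k O π e ψ :=
  ⟨(π, (X : PowerSeries k)), by
    intro n hn
    exact ⟨n, le_rfl, fun i hi => ⟨π i, (hψ i).symm, by simp⟩⟩⟩

/-- The ring `F = O[1/π]`. -/
abbrev Fring : Type := Localization.Away (piO k O π e ψ hψ)

/-- Coordinate projection `O → O_j` for `j ∈ ℕ`. -/
def projO (j : ℕ) : closeSubring k O π e ψ →+* O j :=
  (Pi.evalRingHom O j).comp ((RingHom.fst _ _).comp (closeSubring k O π e ψ).subtype)

/-- Coordinate projection `O → O_∞`. -/
def projInf : closeSubring k O π e ψ →+* PowerSeries k :=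
  (RingHom.snd _ _).comp (closeSubring k O π e ψ).subtype

/-- The product ring `∏_{i ≥ B} O_i × O_∞`. -/
abbrev ProdRingGe (B : ℕ) : Type := ((i : {i : ℕ // B ≤ i}) → O i.1) × PowerSeries k

/-- The projection `∏_{i ∈ ℕ} O_i × O_∞ → ∏_{i ≥ B} O_i × O_∞`. -/
def projGe (B : ℕ) : ProdRing k O →+* ProdRingGe k O B :=
  RingHom.prodMap (Pi.ringHom fun i => Pi.evalRingHom O i.1) (RingHom.id _)

/-- The composite `O → ∏_{i ≥ B} O_i × O_∞`. -/
def toGe (B : ℕ) : closeSubring k O π e ψ →+* ProdRingGe k O B :=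
  (projGe k O B).comp (closeSubring k O π e ψ).subtype

/-- `O_{≥ B}`, the image of `O` under the coordinate projection. -/
def OgeB (B : ℕ) : Subring (ProdRingGe k O B) := (toGe k O π e ψ B).range

/-- The projection `O → O_{≥ B}`. -/
def toOgeB (B : ℕ) : closeSubring k O π e ψ →+* OgeB k O π e ψ B :=
  (toGe k O π e ψ B).rangeRestrict

/-- The image of `π` in `O_{≥ B}`. -/
def piGe (B : ℕ) : OgeB k O π e ψ B := toOgeB k O π e ψ B (piO k O π e ψ hψ)

/-- The ring `F_{≥ B} = O_{≥ B}[1/π]`. -/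
abbrev FgeB (B : ℕ) : Type := Localization.Away (piGe k O π e ψ hψ B)

/-- The projection `F → F_{≥ B}`. -/
def projFge (B : ℕ) : Fring k O π e ψ hψ →+* FgeB k O π e ψ hψ B :=
  Localization.awayLift
    ((algebraMap (OgeB k O π e ψ B) (FgeB k O π e ψ hψ B)).comp (toOgeB k O π e ψ B))
    (piO k O π e ψ hψ)
    (IsLocalization.map_units (M := Submonoid.powers (piGe k O π e ψ hψ B)) _
      ⟨piGe k O π e ψ hψ B, Submonoid.mem_powers _⟩)

variable [∀ i, IsDomain (O i)] (hπ : ∀ i, Irreducible (π i))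

/-- The induced map `F → F_j` for `j ∈ ℕ`, where `F_j = Frac(O_j)`. -/
def locProj (j : ℕ) : Fring k O π e ψ hψ →+* FractionRing (O j) :=
  Localization.awayLift
    ((algebraMap (O j) (FractionRing (O j))).comp (projO k O π e ψ j))
    (piO k O π e ψ hψ)
    (IsLocalization.map_units (M := nonZeroDivisors (O j)) _
      ⟨π j, mem_nonZeroDivisors_of_ne_zero (hπ j).ne_zero⟩)

/-- The induced map `F → F_∞`, where `F_∞ = Frac(k[[π_∞]]) = k((π_∞))`. -/
def locProjInf : Fring k O π e ψ hψ →+* FractionRing (PowerSeries k) :=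
  Localization.awayLift
    ((algebraMap (PowerSeries k) (FractionRing (PowerSeries k))).comp (projInf k O π e ψ))
    (piO k O π e ψ hψ)
    (IsLocalization.map_units (M := nonZeroDivisors (PowerSeries k)) _
      ⟨(X : PowerSeries k), mem_nonZeroDivisors_of_ne_zero PowerSeries.X_ne_zero⟩)


/-- The image of `π` in `F_{≥ B}` is a unit. -/
def piGeUnit (B : ℕ) : (FgeB k O π e ψ hψ B)ˣ :=
  (IsLocalization.map_units (M := Submonoid.powers (piGe k O π e ψ hψ B))
    (FgeB k O π e ψ hψ B) ⟨piGe k O π e ψ hψ B, Submonoid.mem_powers _⟩).unit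


/-!
Write `a = x / π^m` with `x ∈ O`. The hypothesis on `a_∞` says that `x_∞ = π_∞^N u` with
`N = n + m` and `u` a unit of `k[[π_∞]]`. Since `ψ_i(π_∞) = π_i`, closeness of the coordinates
of `x` gives `x_i ≡ π_i^N u_i mod π_i^(N+r)` for `i ≫ r`, where `u_i` lifts `ψ_i(u)`. Hence
`x_i = π_i^N w_i` for large `i`, and cancelling `π_i^N` shows that `w = (w_i, u)` lies in `O`;
its coordinates `w_i ≡ u_i mod π_i` are eventually units. So `a = π^n w` in `F_{≥B}` and
`a_i = π_i^n w_i` with `w_i` a unit, i.e. `a_i` has valuation exactly `n`.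
-/

open IsLocalRing

section LocalRing

variable {R : Type*} [CommRing R] [IsLocalRing R] {ϖ : R}

theorem isUnit_of_isUnit_mk_span_pow (hϖ : ϖ ∈ maximalIdeal R) {M : ℕ} (hM : M ≠ 0) {y : R}
    (hy : IsUnit (Ideal.Quotient.mk (Ideal.span {ϖ ^ M}) y)) : IsUnit y :=
  have : IsLocalHom (Ideal.Quotient.mk (Ideal.span {ϖ ^ M})) :=
    isLocalHom_of_le_jacobson_bot _ <| by
      rw [jacobson_eq_maximalIdeal ⊥ bot_ne_top, Ideal.span_le, Set.singleton_subset_iff]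
      exact Ideal.pow_mem_of_mem _ hϖ M (Nat.pos_of_ne_zero hM)
  hy.of_map _ y

theorem isUnit_of_sub_mem_span (hϖ : ϖ ∈ maximalIdeal R) {x y : R} (hy : IsUnit y)
    (h : x - y ∈ Ideal.span {ϖ}) : IsUnit x := by
  by_contra hx
  have hxy : x - y ∈ maximalIdeal R := (Ideal.span_singleton_le_iff_mem _).2 hϖ h
  have : y ∈ maximalIdeal R := by
    simpa using (maximalIdeal R).sub_mem ((mem_maximalIdeal x).2 hx) hxy
  exact (mem_maximalIdeal y).1 this hy

end LocalRing

theorem mem_span_pow_of_pow_mul_mem {R : Type*} [CommRing R] [IsDomain R] {ϖ z : R} (hϖ : ϖ ≠ 0)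
    {n N : ℕ} (h : ϖ ^ N * z ∈ Ideal.span {ϖ ^ (n + N)}) : z ∈ Ideal.span {ϖ ^ n} := by
  rw [Ideal.mem_span_singleton, pow_add, mul_comm] at h
  exact Ideal.mem_span_singleton.2 ((mul_dvd_mul_iff_left (pow_ne_zero N hϖ)).1 h)

theorem IsDiscreteValuationRing.pow_dvd_and_not_pow_succ_dvd_iff {R : Type*} [CommRing R]
    [IsDomain R] [IsDiscreteValuationRing R] {ϖ : R} (hϖ : Irreducible ϖ) {N : ℕ} {y : R} :
    (ϖ ^ N ∣ y ∧ ¬ ϖ ^ (N + 1) ∣ y) ↔ ∃ u, IsUnit u ∧ y = ϖ ^ N * u := by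
  have hcancel : ∀ u : R, ϖ ^ (N + 1) ∣ ϖ ^ N * u ↔ ϖ ∣ u := fun u => by
    rw [pow_succ, mul_dvd_mul_iff_left (pow_ne_zero N hϖ.ne_zero)]
  constructor
  · rintro ⟨⟨u, rfl⟩, hndvd⟩
    refine ⟨u, ?_, rfl⟩
    by_contra hu
    have : u ∈ Ideal.span {ϖ} := by
      rw [← (irreducible_iff_uniformizer ϖ).1 hϖ]
      exact (mem_maximalIdeal u).2 hu
    exact hndvd ((hcancel u).2 (Ideal.mem_span_singleton.1 this))
  · rintro ⟨u, hu, rfl⟩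
    exact ⟨dvd_mul_right _ _, fun h => hϖ.not_isUnit (isUnit_of_dvd_unit ((hcancel u).1 h) hu)⟩

section FractionField

variable {R K : Type*} [CommRing R] [Field K] [Algebra R K] [IsFractionRing R K]
  {ϖ : R} {a : K} {m : ℕ} {y : R}

theorem exists_eq_zpow_mul_iff_pow_dvd (hϖ : ϖ ≠ 0)
    (hy : a * algebraMap R K ϖ ^ m = algebraMap R K y) (j : ℤ) :
    (∃ b : R, a = algebraMap R K ϖ ^ j * algebraMap R K b) ↔ ϖ ^ (j + m).toNat ∣ y := by
  set c := algebraMap R K ϖ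
  have hc : c ≠ 0 := (map_ne_zero_iff _ (IsFractionRing.injective R K)).2 hϖ
  have hyc : algebraMap R K y = a * c ^ (m : ℤ) := by rw [zpow_natCast, hy]
  constructor
  · rintro ⟨b, rfl⟩
    rcases le_or_gt 0 (j + m) with hjm | hjm
    · refine ⟨b, IsFractionRing.injective R K ?_⟩
      rw [hyc, map_mul, map_pow, ← zpow_natCast, Int.toNat_of_nonneg hjm, zpow_add₀ hc]
      ring
    · rw [Int.toNat_eq_zero.2 hjm.le, pow_zero]
      exact one_dvd y
  · rintro ⟨d, rfl⟩
    refine ⟨ϖ ^ (-(j + m)).toNat * d, mul_right_cancel₀ (zpow_ne_zero (m : ℤ) hc) ?_⟩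
    rw [← hyc, map_mul, map_mul, map_pow, map_pow, ← zpow_natCast, ← zpow_natCast c (Int.toNat _)]
    rw [show c ^ j * (c ^ ((-(j + m)).toNat : ℤ) * algebraMap R K d) * c ^ (m : ℤ)
      = c ^ (j + (-(j + m)).toNat + m : ℤ) * algebraMap R K d by
        simp only [zpow_add₀ hc]; ring]
    congr 2
    omega

theorem exists_zpow_mul_and_not_zpow_succ_mul_iff [IsDomain R] [IsDiscreteValuationRing R]
    (hϖ : Irreducible ϖ) (hy : a * algebraMap R K ϖ ^ m = algebraMap R K y) (n : ℤ) :
    ((∃ b : R, a = algebraMap R K ϖ ^ n * algebraMap R K b)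
      ∧ ¬ ∃ b : R, a = algebraMap R K ϖ ^ (n + 1) * algebraMap R K b)
    ↔ ∃ N : ℕ, (N : ℤ) = n + m ∧ ∃ u, IsUnit u ∧ y = ϖ ^ N * u := by
  rw [exists_eq_zpow_mul_iff_pow_dvd hϖ.ne_zero hy, exists_eq_zpow_mul_iff_pow_dvd hϖ.ne_zero hy]
  rcases le_or_gt 0 (n + m) with hnm | hnm
  · obtain ⟨N, hN⟩ := Int.eq_ofNat_of_zero_le hnm
    rw [hN, show n + 1 + m = ((N + 1 : ℕ) : ℤ) by omega, Int.toNat_natCast, Int.toNat_natCast,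
      IsDiscreteValuationRing.pow_dvd_and_not_pow_succ_dvd_iff hϖ]
    exact ⟨fun h => ⟨N, rfl, h⟩, fun ⟨N', hN', h⟩ => by rwa [Nat.cast_inj.1 hN'] at h⟩
  · rw [Int.toNat_eq_zero.2 hnm.le, Int.toNat_eq_zero.2 (by omega), pow_zero]
    exact iff_of_false (fun h => h.2 (one_dvd y)) fun ⟨N, hN, _⟩ => by omega

end FractionField

theorem eq_zpow_mul_of_mul_pow_eq {S : Type*} [CommRing S] (U : Sˣ) {a c : S} {m N : ℕ} {n : ℤ}
    (hN : (N : ℤ) = n + m) (h : a * ↑U ^ m = ↑U ^ N * c) : a = ↑(U ^ n) * c := by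
  have hn : n = N + (-m : ℤ) := by omega
  rw [hn, zpow_add, zpow_natCast, zpow_neg, zpow_natCast, Units.val_mul, mul_right_comm,
    Units.val_pow_eq_pow_val, ← h, mul_assoc, ← Units.val_pow_eq_pow_val, Units.mul_inv, mul_one]

section CloseFields

variable {k O π e ψ}

omit [∀ i, IsDomain (O i)] in
theorem closeMem.sub_mem_of_mk_eq (he : ∀ i, i ≤ e i) {x : ProdRing k O}
    (hx : closeMem k O π e ψ x) {n : ℕ} (hn : 1 ≤ n) :
    ∃ B, n ≤ B ∧ ∀ i, B ≤ i → ∀ y : O i, Ideal.Quotient.mk (Ideal.span {π i ^ e i}) y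
      = ψ i (Ideal.Quotient.mk (Ideal.span {(X : PowerSeries k) ^ e i}) x.2) →
      x.1 i - y ∈ Ideal.span {π i ^ n} := by
  obtain ⟨B, hnB, hB⟩ := hx n hn
  refine ⟨B, hnB, fun i hi y hy => ?_⟩
  obtain ⟨y', hy', hxy'⟩ := hB i hi
  have hyy' : y' - y ∈ Ideal.span {π i ^ n} :=
    Ideal.span_singleton_le_span_singleton.2 (pow_dvd_pow _ ((hnB.trans hi).trans (he i)))
      (Ideal.Quotient.eq.1 (hy'.trans hy.symm))
  simpa using Ideal.add_mem _ hxy' hyy'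

omit [∀ i, IsDomain (O i)] in
theorem closeMem.eventually_isUnit [∀ i, IsLocalRing (O i)] (he : ∀ i, i ≤ e i)
    (hπ_max : ∀ i, π i ∈ maximalIdeal (O i)) {w : ProdRing k O} (hw : closeMem k O π e ψ w)
    (hu : IsUnit w.2) : ∃ B, ∀ i, B ≤ i → IsUnit (w.1 i) := by
  obtain ⟨B, hB, h⟩ := hw 1 le_rfl
  refine ⟨B, fun i hi => ?_⟩
  obtain ⟨y, hy, hwy⟩ := h i hi
  have hy_unit : IsUnit y :=
    isUnit_of_isUnit_mk_span_pow (hπ_max i) (by have := he i; omega) (hy ▸ (hu.map _).map _)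
  exact isUnit_of_sub_mem_span (hπ_max i) hy_unit (by simpa using hwy)

theorem exists_eq_pow_mul_of_snd_eq_X_pow_mul
    (hψ : ∀ i, ψ i (Ideal.Quotient.mk _ (X : PowerSeries k)) = Ideal.Quotient.mk _ (π i))
    (he : ∀ i, i ≤ e i) (hπ₀ : ∀ i, π i ≠ 0)
    {x : closeSubring k O π e ψ} {N : ℕ} {u : PowerSeries k} (hxu : x.1.2 = X ^ N * u) :
    ∃ B, 1 ≤ B ∧ ∃ w : closeSubring k O π e ψ,
      w.1.2 = u ∧ ∀ i, B ≤ i → x.1.1 i = π i ^ N * w.1.1 i := by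
  classical
  let lift : ∀ i, O i := fun i => Function.surjInv Ideal.Quotient.mk_surjective
    (ψ i (Ideal.Quotient.mk (Ideal.span {(X : PowerSeries k) ^ e i}) u))
  have hlift : ∀ i, Ideal.Quotient.mk _ (lift i) = ψ i (Ideal.Quotient.mk _ u) := fun i =>
    Function.surjInv_eq _ _
  have hclose : ∀ n, 1 ≤ n → ∃ B, n ≤ B ∧ ∀ i, B ≤ i →
      x.1.1 i - π i ^ N * lift i ∈ Ideal.span {π i ^ (n + N)} := fun n hn => by
    obtain ⟨B, hB, h⟩ := x.2.sub_mem_of_mk_eq he (n := n + N) (by omega)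
    refine ⟨B, by omega, fun i hi => h i hi _ ?_⟩
    rw [hxu, map_mul, map_mul, map_pow, map_pow, map_mul, map_pow, hψ, hlift]
  obtain ⟨B, hB, hB'⟩ := hclose 1 le_rfl
  have hdvd : ∀ i, B ≤ i → π i ^ N ∣ x.1.1 i := fun i hi => by
    have := Ideal.mem_span_singleton.1 (hB' i hi)
    rw [add_comm, pow_add] at this
    simpa using dvd_add ((dvd_mul_right _ _).trans this) (dvd_mul_right (π i ^ N) (lift i))
  -- the coordinates of `w` below `B` play no role in membership in `O`
  let w : ProdRing k O := (fun i => if h : π i ^ N ∣ x.1.1 i then h.choose else 0, u)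
  have hxw : ∀ i, B ≤ i → x.1.1 i = π i ^ N * w.1 i := fun i hi => by
    simpa [w, dif_pos (hdvd i hi)] using (hdvd i hi).choose_spec
  have hw : closeMem k O π e ψ w := by
    intro n hn
    obtain ⟨B', hB'n, h⟩ := hclose n hn
    refine ⟨max B B', le_max_of_le_right hB'n, fun i hi => ⟨lift i, hlift i, ?_⟩⟩
    apply mem_span_pow_of_pow_mul_mem (hπ₀ i) (N := N)
    rw [mul_sub, ← hxw i (le_of_max_le_left hi)]
    exact h i (le_of_max_le_right hi)
  exact ⟨B, hB, ⟨w, hw⟩, rfl, hxw⟩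

end CloseFields

section Projections

variable {k O π e ψ hψ hπ}

omit [∀ i, IsDomain (O i)] in
theorem projFge_algebraMap (B : ℕ) (z : closeSubring k O π e ψ) :
    projFge k O π e ψ hψ B (algebraMap _ _ z) = algebraMap _ _ (toOgeB k O π e ψ B z) :=
  IsLocalization.lift_eq _ z

theorem locProj_algebraMap (i : ℕ) (z : closeSubring k O π e ψ) :
    locProj k O π e ψ hψ hπ i (algebraMap _ _ z) = algebraMap _ _ (z.1.1 i) :=
  IsLocalization.lift_eq _ z

omit [∀ i, IsDomain (O i)] in
theorem locProjInf_algebraMap (z : closeSubring k O π e ψ) :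
    locProjInf k O π e ψ hψ (algebraMap _ _ z) = algebraMap _ _ z.1.2 :=
  IsLocalization.lift_eq _ z

omit [∀ i, IsDomain (O i)] in
theorem toOgeB_eq_of_eqOn_ge {B : ℕ} {x y : closeSubring k O π e ψ}
    (h : ∀ i, B ≤ i → x.1.1 i = y.1.1 i) (h' : x.1.2 = y.1.2) :
    toOgeB k O π e ψ B x = toOgeB k O π e ψ B y :=
  Subtype.ext (Prod.ext (funext fun i => h i i.2) h')

end Projections

theorem statement_5_general
    (k : Type) [Field k]
    (O : ℕ → Type) [∀ i, CommRing (O i)] [∀ i, IsDomain (O i)]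
    [∀ i, IsDiscreteValuationRing (O i)]
    (π : ∀ i, O i) (hπ : ∀ i, Irreducible (π i))
    (e : ℕ → ℕ) (he : ∀ i, i ≤ e i)
    (ψ : ∀ i, ((PowerSeries k) ⧸ (Ideal.span {(X : PowerSeries k) ^ e i})) ≃+*
      ((O i) ⧸ (Ideal.span {π i ^ e i})))
    (hψ : ∀ i, ψ i (Ideal.Quotient.mk _ (X : PowerSeries k)) = Ideal.Quotient.mk _ (π i))
    (a : Fring k O π e ψ hψ) (n : ℤ)
    (h1 : ∃ b : PowerSeries k, locProjInf k O π e ψ hψ a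
        = (algebraMap (PowerSeries k) (FractionRing (PowerSeries k)) (X : PowerSeries k)) ^ n
          * algebraMap (PowerSeries k) (FractionRing (PowerSeries k)) b)
    (h2 : ¬ ∃ b : PowerSeries k, locProjInf k O π e ψ hψ a
        = (algebraMap (PowerSeries k) (FractionRing (PowerSeries k)) (X : PowerSeries k)) ^ (n + 1)
          * algebraMap (PowerSeries k) (FractionRing (PowerSeries k)) b) :
    ∃ B, 1 ≤ B
      ∧ (∃ c : OgeB k O π e ψ B, projFge k O π e ψ hψ B a
          = (((piGeUnit k O π e ψ hψ B) ^ n : (FgeB k O π e ψ hψ B)ˣ) : FgeB k O π e ψ hψ B)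
            * algebraMap (OgeB k O π e ψ B) (FgeB k O π e ψ hψ B) c)
      ∧ ∀ i, B ≤ i →
          (∃ b : O i, locProj k O π e ψ hψ hπ i a
              = (algebraMap (O i) (FractionRing (O i)) (π i)) ^ n
                * algebraMap (O i) (FractionRing (O i)) b)
          ∧ ¬ (∃ b : O i, locProj k O π e ψ hψ hπ i a
              = (algebraMap (O i) (FractionRing (O i)) (π i)) ^ (n + 1)
                * algebraMap (O i) (FractionRing (O i)) b) := by
  obtain ⟨m, x, hx⟩ := IsLocalization.Away.surj (piO k O π e ψ hψ) a
  have hx_inf := congrArg (locProjInf k O π e ψ hψ) hx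
  rw [map_mul, map_pow, locProjInf_algebraMap, locProjInf_algebraMap] at hx_inf
  obtain ⟨N, hN, u, hu, hxu⟩ :=
    (exists_zpow_mul_and_not_zpow_succ_mul_iff X_irreducible hx_inf n).1 ⟨h1, h2⟩
  obtain ⟨B₀, hB₀, w, rfl, hxw⟩ :=
    exists_eq_pow_mul_of_snd_eq_X_pow_mul hψ he (fun i => (hπ i).ne_zero) hxu
  obtain ⟨B₁, hw⟩ := w.2.eventually_isUnit he (fun i => (hπ i).not_isUnit) hu
  refine ⟨max B₀ B₁, le_max_of_le_left hB₀, ⟨toOgeB k O π e ψ _ w, ?_⟩, fun i hi => ?_⟩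
  · apply eq_zpow_mul_of_mul_pow_eq _ hN
    have hx_ge := congrArg (projFge k O π e ψ hψ (max B₀ B₁)) hx
    rw [map_mul, map_pow, projFge_algebraMap, projFge_algebraMap,
      toOgeB_eq_of_eqOn_ge (y := piO k O π e ψ hψ ^ N * w)
        (fun i hi => hxw i (le_of_max_le_left hi)) hxu, map_mul, map_pow, map_mul, map_pow] at hx_ge
    exact hx_ge
  · have hx_i := congrArg (locProj k O π e ψ hψ hπ i) hx
    rw [map_mul, map_pow, locProj_algebraMap, locProj_algebraMap] at hx_i
    exact (exists_zpow_mul_and_not_zpow_succ_mul_iff (hπ i) hx_i n).2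
      ⟨N, hN, w.1.1 i, hw i (le_of_max_le_right hi), hxw i (le_of_max_le_left hi)⟩

theorem statement_5
    (p : ℕ) (hp : p.Prime)
    (k : Type) [Field k] [CharP k p] [ExpChar k p] [PerfectRing k p]
    (O : ℕ → Type) [∀ i, CommRing (O i)] [∀ i, IsDomain (O i)]
    [∀ i, IsDiscreteValuationRing (O i)] [∀ i, CharZero (O i)]
    (π : ∀ i, O i) (hπ : ∀ i, Irreducible (π i))
    [∀ i, IsAdicComplete (Ideal.span {π i}) (O i)]
    (ρ : ∀ i, ((O i) ⧸ (Ideal.span {π i})) ≃+* k)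
    (e : ℕ → ℕ) (he : ∀ i, i ≤ e i)
    (hpe : ∀ i, Ideal.span {((p : O i))} = Ideal.span {π i ^ e i})
    (ψ : ∀ i, ((PowerSeries k) ⧸ (Ideal.span {(X : PowerSeries k) ^ e i})) ≃+*
      ((O i) ⧸ (Ideal.span {π i ^ e i})))
    (hψ : ∀ i, ψ i (Ideal.Quotient.mk _ (X : PowerSeries k)) = Ideal.Quotient.mk _ (π i))
    (a : Fring k O π e ψ hψ) (n : ℤ)
    (h1 : ∃ b : PowerSeries k, locProjInf k O π e ψ hψ a
        = (algebraMap (PowerSeries k) (FractionRing (PowerSeries k)) (X : PowerSeries k)) ^ n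
          * algebraMap (PowerSeries k) (FractionRing (PowerSeries k)) b)
    (h2 : ¬ ∃ b : PowerSeries k, locProjInf k O π e ψ hψ a
        = (algebraMap (PowerSeries k) (FractionRing (PowerSeries k)) (X : PowerSeries k)) ^ (n + 1)
          * algebraMap (PowerSeries k) (FractionRing (PowerSeries k)) b) :
    ∃ B, 1 ≤ B
      ∧ (∃ c : OgeB k O π e ψ B, projFge k O π e ψ hψ B a
          = (((piGeUnit k O π e ψ hψ B) ^ n : (FgeB k O π e ψ hψ B)ˣ) : FgeB k O π e ψ hψ B)
            * algebraMap (OgeB k O π e ψ B) (FgeB k O π e ψ hψ B) c)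
      ∧ ∀ i, B ≤ i →
          (∃ b : O i, locProj k O π e ψ hψ hπ i a
              = (algebraMap (O i) (FractionRing (O i)) (π i)) ^ n
                * algebraMap (O i) (FractionRing (O i)) b)
          ∧ ¬ (∃ b : O i, locProj k O π e ψ hψ hπ i a
              = (algebraMap (O i) (FractionRing (O i)) (π i)) ^ (n + 1)
                * algebraMap (O i) (FractionRing (O i)) b) :=
  statement_5_general k O π hπ e he ψ hψ a n h1 h2
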